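/- Let Σ ⊇ {0,1} be a finite alphabet. No compact decoder-only Transformer over Σ eventually learns both the all-zero sequence 000… and the increasing-spacing sequence (the sequence α ∈ {0,1}^ω with α_n = 1 if and only if n = m(m+1)/2 for some m ≥ 1, i.e., the sequence 10100100010000100000…). -/

import Mathlib

open Finset Filter

open Classical in
/-- Relative Hamming distance between two finite sequences. -/
noncomputable def relHamming {A : Type*} {n : ℕ} (α β : Fin n → A) : ℝ :=
  ((Finset.univ.filter (fun i => α i ≠ β i)).card : ℝ) / n

/-- Relative Hamming distance between two infinite sequences (1-indexed:
position `n ≥ 1` of the sequence `α : ℕ → A` is `α n`). -/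
noncomputable def relHammingInf {A : Type*} (α β : ℕ → A) : ℝ :=
  Filter.liminf
    (fun n : ℕ => relHamming (fun i : Fin n => α (i.val + 1)) (fun i : Fin n => β (i.val + 1)))
    Filter.atTop

/-- A `d`-dimensional decoder-only attention layer. -/
structure AttentionLayer (d : ℕ) where
  p : ℕ → ℕ → (Fin d → ℝ)
  val : (Fin d → ℝ) → (Fin d → ℝ)
  w : (Fin d → ℝ) → (Fin d → ℝ) → (Fin d → ℝ) → ℝ
  F : (Fin d → ℝ) → (Fin d → ℝ) → (Fin d → ℝ)
  w_pos : ∀ x y z, 0 < w x y z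
  val_cont : Continuous val
  w_cont : Continuous fun t : (Fin d → ℝ) × (Fin d → ℝ) × (Fin d → ℝ) => w t.1 t.2.1 t.2.2
  F_cont : Continuous fun t : (Fin d → ℝ) × (Fin d → ℝ) => F t.1 t.2

/-- A positional encoding is compact if its range is contained in a compact set. -/
def AttentionLayer.CompactPE {d : ℕ} (L : AttentionLayer d) : Prop :=
  ∃ K : Set (Fin d → ℝ), IsCompact K ∧ ∀ i j : ℕ, L.p i j ∈ K

/-- The `j`-th attention vector computed by the layer on input `x`. -/
noncomputable def AttentionLayer.attn {d : ℕ} (L : AttentionLayer d) {n : ℕ}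
    (x : Fin n → (Fin d → ℝ)) (j : Fin n) : Fin d → ℝ :=
  (∑ i ∈ Finset.Iic j, L.w (x i) (x j) (L.p i.val j.val))⁻¹ •
    ∑ i ∈ Finset.Iic j, L.w (x i) (x j) (L.p i.val j.val) • L.val (x i)

/-- The output sequence of the layer on input `x`. -/
noncomputable def AttentionLayer.apply {d : ℕ} (L : AttentionLayer d) {n : ℕ}
    (x : Fin n → (Fin d → ℝ)) : Fin n → (Fin d → ℝ) :=
  fun j => L.F (L.attn x j) (x j)

/-- `sim(x, x̂)`: the minimal `δ ≥ 0` such that `‖x_i − x̂_i‖ ≤ δ` for at least `(1−δ)n`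
indices `i`. -/
noncomputable def simDist {d n : ℕ} (x y : Fin n → (Fin d → ℝ)) : ℝ :=
  sInf {δ : ℝ | 0 ≤ δ ∧
    (1 - δ) * n ≤ ((Finset.univ.filter (fun i => ‖x i - y i‖ ≤ δ)).card : ℝ)}

/-- Sequential application of a list of attention layers. -/
noncomputable def applyLayers {d : ℕ} (Ls : List (AttentionLayer d)) {n : ℕ}
    (x : Fin n → (Fin d → ℝ)) : Fin n → (Fin d → ℝ) :=
  Ls.foldl (fun v L => L.apply v) x

/-- A decoder-only Transformer over a finite alphabet `A`. -/
structure Transformer (A : Type*) [Fintype A] (d : ℕ) where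
  embed : A → ℕ → (Fin d → ℝ)
  layers : List (AttentionLayer d)
  proj : (Fin d → ℝ) → (A → ℝ)
  proj_cont : Continuous proj
  proj_nonneg : ∀ y a, 0 ≤ proj y a
  proj_sum : ∀ y, ∑ a, proj y a = 1

/-- The output probability distribution (as a vector in `ℝ^A`) of the Transformer on a
nonempty input sequence. -/
noncomputable def Transformer.eval {A : Type*} [Fintype A] {d : ℕ} (T : Transformer A d)
    {n : ℕ} (α : Fin (n + 1) → A) : A → ℝ :=
  T.proj (applyLayers T.layers (fun j => T.embed (α j) j.val) (Fin.last n))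

/-- A Transformer is compact if its input embedding has range in a compact set and all of
its layers have compact positional encoding. -/
def Transformer.IsCompactT {A : Type*} [Fintype A] {d : ℕ} (T : Transformer A d) : Prop :=
  (∃ K : Set (Fin d → ℝ), IsCompact K ∧ ∀ (a : A) (i : ℕ), T.embed a i ∈ K) ∧
  ∀ L ∈ T.layers, L.CompactPE

/-- `T` eventually learns the infinite sequence `α` (1-indexed: position `n ≥ 1` is `α n`). -/
def EventuallyLearns {A : Type*} [Fintype A] {d : ℕ} (T : Transformer A d) (α : ℕ → A) :
    Prop :=
  ∃ ε : ℝ, 0 < ε ∧ ∃ n₀ : ℕ, ∀ n ≥ n₀, ∀ σ : A, σ ≠ α (n + 2) →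
    T.eval (fun i : Fin (n + 1) => α (i.val + 1)) σ + ε ≤
      T.eval (fun i : Fin (n + 1) => α (i.val + 1)) (α (n + 2))

/-!
The two sequences differ only at triangular positions, a set of density zero. In a compact
Transformer every attention weight is bounded above and below by positive constants, so
changing the input on a density-zero set of positions moves each attention average only
slightly at all other sufficiently late positions; by induction over the layers the same
holds for the whole Transformer. Just before a triangular number `m(m+1)/2` the two prefixes
therefore produce nearly the same output, while one sequence must predict `0` and the other
`1` there with a fixed margin.
-/

def IsTriangular (n : ℕ) : Prop := ∃ m : ℕ, 1 ≤ m ∧ m * (m + 1) = 2 * n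

theorem exists_isTriangular_add_two (N : ℕ) :
    ∃ n ≥ N, IsTriangular (n + 2) ∧ ¬ IsTriangular (n + 1) := by
  set m := N + 2
  obtain ⟨t, ht⟩ := Nat.even_mul_succ_self m
  have hm : 2 * (m + 1) ≤ m * (m + 1) := Nat.mul_le_mul_right _ (by omega)
  refine ⟨t - 2, by omega, ⟨m, by omega, by omega⟩, ?_⟩
  -- `t - 1` lies strictly between the triangular numbers `t - m` and `t`
  rintro ⟨k, -, hk⟩
  have hk' : k * (k + 1) + 2 = t + t := by omega
  have hkm : k + 1 ≤ m := by
    by_contra! h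
    nlinarith [Nat.mul_le_mul h.le (Nat.succ_le_succ h.le)]
  nlinarith [Nat.mul_le_mul hkm hkm]

def HasDensityZero (S : Set ℕ) : Prop :=
  ∀ θ > 0, ∀ᶠ j in atTop, ((S ∩ Set.Iic j).ncard : ℝ) ≤ θ * (j + 1)

theorem HasDensityZero.union {S T : Set ℕ} (hS : HasDensityZero S) (hT : HasDensityZero T) :
    HasDensityZero (S ∪ T) := by
  intro θ hθ
  filter_upwards [hS (θ / 2) (half_pos hθ), hT (θ / 2) (half_pos hθ)] with j hSj hTj
  have : (((S ∪ T) ∩ Set.Iic j).ncard : ℝ) ≤ (S ∩ Set.Iic j).ncard + (T ∩ Set.Iic j).ncard := by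
    rw [Set.union_inter_distrib_right]
    exact_mod_cast Set.ncard_union_le _ _
  linarith

theorem Set.Finite.hasDensityZero {S : Set ℕ} (hS : S.Finite) : HasDensityZero S := by
  intro θ hθ
  filter_upwards [eventually_ge_atTop ⌈(S.ncard : ℝ) / θ⌉₊] with j hj
  have hle : ((S ∩ Set.Iic j).ncard : ℝ) ≤ S.ncard := by
    exact_mod_cast Set.ncard_le_ncard Set.inter_subset_left hS
  have hj' := (div_le_iff₀ hθ).1 (Nat.ceil_le.1 hj)
  nlinarith

theorem ncard_isTriangular_succ_inter_Iic_le (j : ℕ) :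
    ({i | IsTriangular (i + 1)} ∩ Set.Iic j).ncard ≤ Nat.sqrt (2 * (j + 1)) := by
  set f : ℕ → ℕ := fun m => m * (m + 1) / 2 - 1
  calc _ ≤ (((Finset.Icc 1 (Nat.sqrt (2 * (j + 1)))).image f : Finset ℕ) : Set ℕ).ncard := by
        refine Set.ncard_le_ncard ?_ (Finset.finite_toSet _)
        rintro i ⟨⟨m, hm, hmi⟩, hij⟩
        rw [Set.mem_Iic] at hij
        simp only [Finset.coe_image, Finset.coe_Icc, Set.mem_image, Set.mem_Icc]
        refine ⟨m, ⟨hm, Nat.le_sqrt.2 (by nlinarith)⟩, ?_⟩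
        simp only [f, hmi]
        omega
    _ ≤ _ := by
        rw [Set.ncard_coe_finset]
        exact Finset.card_image_le.trans (by simp)

theorem hasDensityZero_isTriangular_succ : HasDensityZero {i | IsTriangular (i + 1)} := by
  intro θ hθ
  filter_upwards [eventually_ge_atTop ⌈2 / θ ^ 2⌉₊] with j hj
  have hj' := (div_le_iff₀ (by positivity)).1 (Nat.ceil_le.1 hj)
  set s := Nat.sqrt (2 * (j + 1))
  have hs : (s : ℝ) ^ 2 ≤ 2 * (j + 1) := by exact_mod_cast Nat.sqrt_le' (2 * (j + 1))
  have hsθ : (s : ℝ) ≤ θ * (j + 1) := by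
    by_contra! h
    have hθj : 0 ≤ θ * (j + 1) := by positivity
    nlinarith [mul_le_mul h.le h.le hθj (by positivity)]
  exact le_trans (by exact_mod_cast ncard_isTriangular_succ_inter_Iic_le j) hsθ

theorem Fin.card_filter_Iic_le_ncard (S : Set ℕ) [DecidablePred (· ∈ S)] {n : ℕ} (j : Fin n) :
    #((Iic j).filter fun i : Fin n => (i : ℕ) ∈ S) ≤ (S ∩ Set.Iic (j : ℕ)).ncard := by
  rw [← Set.ncard_coe_finset]
  refine Set.ncard_le_ncard_of_injOn Fin.val (fun i hi => ?_) Fin.val_injective.injOn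
    ((Set.finite_Iic _).inter_of_right S)
  simp only [coe_filter, mem_Iic, Set.mem_ofPred_eq] at hi
  exact ⟨hi.2, Fin.le_def.1 hi.1⟩

theorem Finset.norm_centerMass_sub_centerMass_le {ι E : Type*} [NormedAddCommGroup E]
    [NormedSpace ℝ E] {t : Finset ι} (ht : t.Nonempty) {w w' : ι → ℝ} {z z' : ι → E} {M : ℝ}
    (hw : ∀ i ∈ t, 0 < w i) (hw' : ∀ i ∈ t, 0 < w' i) (hz' : ∀ i ∈ t, ‖z' i‖ ≤ M) :
    ‖t.centerMass w z - t.centerMass w' z'‖ ≤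
      (1 + M) * ((∑ i ∈ t, w i)⁻¹ * ∑ i ∈ t, dist (w i, w i • z i) (w' i, w' i • z' i)) := by
  set S := ∑ i ∈ t, w i
  set S' := ∑ i ∈ t, w' i
  set c' := t.centerMass w' z'
  have hS : 0 < S := sum_pos hw ht
  have hS' : 0 < S' := sum_pos hw' ht
  have hc' : ‖c'‖ ≤ M := mem_closedBall_zero_iff.1 <| (convex_closedBall 0 M).centerMass_mem
    (fun i hi => (hw' i hi).le) hS' fun i hi => mem_closedBall_zero_iff.2 (hz' i hi)
  have hU' : ∑ i ∈ t, w' i • z' i = S' • c' := (smul_inv_smul₀ hS'.ne' _).symm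
  have hsplit : t.centerMass w z - c' =
      S⁻¹ • (∑ i ∈ t, (w i • z i - w' i • z' i) + ∑ i ∈ t, (w' i - w i) • c') := by
    rw [sum_sub_distrib, ← sum_smul, sum_sub_distrib, hU', centerMass, sub_smul,
      smul_add, smul_sub, smul_sub, smul_smul S⁻¹ S, inv_mul_cancel₀ hS.ne', one_smul]
    abel
  have hterm : ∀ i ∈ t, ‖w i • z i - w' i • z' i‖ + ‖(w' i - w i) • c'‖ ≤
      (1 + M) * dist (w i, w i • z i) (w' i, w' i • z' i) := by
    intro i _
    have hfst : |w' i - w i| ≤ dist (w i, w i • z i) (w' i, w' i • z' i) := by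
      rw [abs_sub_comm, ← Real.dist_eq, Prod.dist_eq]
      exact le_max_left _ _
    have hsnd : ‖w i • z i - w' i • z' i‖ ≤ dist (w i, w i • z i) (w' i, w' i • z' i) := by
      rw [← dist_eq_norm, Prod.dist_eq]
      exact le_max_right _ _
    rw [norm_smul, Real.norm_eq_abs]
    nlinarith [mul_le_mul hfst hc' (norm_nonneg _) dist_nonneg]
  rw [hsplit, norm_smul, Real.norm_eq_abs, abs_of_pos (inv_pos.2 hS), mul_left_comm, mul_sum]
  gcongr
  calc _ ≤ ‖∑ i ∈ t, (w i • z i - w' i • z' i)‖ + ‖∑ i ∈ t, (w' i - w i) • c'‖ := norm_add_le _ _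
    _ ≤ ∑ i ∈ t, ‖w i • z i - w' i • z' i‖ + ∑ i ∈ t, ‖(w' i - w i) • c'‖ :=
        add_le_add (norm_sum_le _ _) (norm_sum_le _ _)
    _ ≤ _ := by
        rw [← sum_add_distrib]
        exact sum_le_sum hterm

theorem Finset.sum_le_card_mul_of_sparse {ι : Type*} {t : Finset ι} {p : ι → Prop}
    [DecidablePred p] {g : ι → ℝ} {e G θ : ℝ} (he : 0 ≤ e) (hG : 0 ≤ G)
    (hgood : ∀ i ∈ t, ¬ p i → g i ≤ e) (hbad : ∀ i ∈ t, g i ≤ G)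
    (hcount : (#(t.filter p) : ℝ) ≤ θ * #t) :
    ∑ i ∈ t, g i ≤ #t * (e + θ * G) := by
  rw [← sum_filter_add_sum_filter_not t p]
  have hp : ∑ i ∈ t.filter p, g i ≤ #(t.filter p) * G := by
    simpa using sum_le_card_nsmul _ _ G fun i hi => hbad i (mem_filter.1 hi).1
  have hnp : ∑ i ∈ t.filter (¬ p ·), g i ≤ #(t.filter (¬ p ·)) * e := by
    simpa using sum_le_card_nsmul _ _ e fun i hi => hgood i (mem_filter.1 hi).1 (mem_filter.1 hi).2
  have hcard : (#(t.filter (¬ p ·)) : ℝ) ≤ #t := by exact_mod_cast card_filter_le _ _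
  nlinarith [mul_le_mul_of_nonneg_right hcount hG, mul_le_mul_of_nonneg_right hcard he]

theorem Finset.norm_centerMass_sub_centerMass_le_of_sparse {ι E : Type*} [NormedAddCommGroup E]
    [NormedSpace ℝ E] {t : Finset ι} (ht : t.Nonempty) {w w' : ι → ℝ} {z z' : ι → E}
    {p : ι → Prop} [DecidablePred p] {a M e G θ : ℝ} (ha : 0 < a) (hM : 0 ≤ M) (he : 0 ≤ e)
    (hG : 0 ≤ G) (hw : ∀ i ∈ t, a ≤ w i) (hw' : ∀ i ∈ t, 0 < w' i) (hz' : ∀ i ∈ t, ‖z' i‖ ≤ M)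
    (hgood : ∀ i ∈ t, ¬ p i → dist (w i, w i • z i) (w' i, w' i • z' i) ≤ e)
    (hbad : ∀ i ∈ t, dist (w i, w i • z i) (w' i, w' i • z' i) ≤ G)
    (hcount : (#(t.filter p) : ℝ) ≤ θ * #t) :
    ‖t.centerMass w z - t.centerMass w' z'‖ ≤ (1 + M) * ((e + θ * G) / a) := by
  refine (norm_centerMass_sub_centerMass_le ht (fun i hi => ha.trans_le (hw i hi)) hw' hz').trans
    (mul_le_mul_of_nonneg_left ?_ (by linarith))
  have hcard : (0 : ℝ) < #t := by exact_mod_cast ht.card_pos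
  have hS : a * #t ≤ ∑ i ∈ t, w i := by
    simpa [mul_comm] using card_nsmul_le_sum t w a hw
  calc _ ≤ (a * #t)⁻¹ * (#t * (e + θ * G)) := by
        gcongr
        exact sum_le_card_mul_of_sparse he hG hgood hbad hcount
    _ = (e + θ * G) / a := by field_simp

section SparseStable

variable {E E' E'' : Type*} [PseudoMetricSpace E] [PseudoMetricSpace E'] [PseudoMetricSpace E'']

/-- `δ` is chosen before `S`, so that in `SparseStable.comp` the outer map can be applied with
`S` enlarged by the initial segment on which the inner one gives no control. -/
structure SparseStable (f : ∀ n, (Fin n → E) → Fin n → E') (C : Set E) (C' : Set E') :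
    Prop where
  mapsTo : ∀ n (x : Fin n → E), (∀ i, x i ∈ C) → ∀ j, f n x j ∈ C'
  stable : ∀ ε > 0, ∃ δ > 0, ∀ S : Set ℕ, HasDensityZero S → ∃ N : ℕ,
    ∀ n (x y : Fin n → E), (∀ i, x i ∈ C) → (∀ i, y i ∈ C) →
      (∀ i : Fin n, (i : ℕ) ∉ S → dist (x i) (y i) ≤ δ) →
      ∀ j : Fin n, (j : ℕ) ∉ S → N ≤ j → dist (f n x j) (f n y j) ≤ ε

theorem SparseStable.id (C : Set E) : SparseStable (fun _ x => x) C C where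
  mapsTo _ _ hx := hx
  stable ε hε := ⟨ε, hε, fun _ _ => ⟨0, fun _ _ _ _ _ hxy j hj _ => hxy j hj⟩⟩

theorem SparseStable.comp {f : ∀ n, (Fin n → E) → Fin n → E'}
    {g : ∀ n, (Fin n → E') → Fin n → E''} {C : Set E} {C' : Set E'} {C'' : Set E''}
    (hg : SparseStable g C' C'') (hf : SparseStable f C C') :
    SparseStable (fun n x => g n (f n x)) C C'' where
  mapsTo n x hx := hg.mapsTo n _ (hf.mapsTo n x hx)
  stable ε hε := by
    obtain ⟨δ₁, hδ₁, hg'⟩ := hg.stable ε hε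
    obtain ⟨δ, hδ, hf'⟩ := hf.stable δ₁ hδ₁
    refine ⟨δ, hδ, fun S hS => ?_⟩
    obtain ⟨N₀, hN₀⟩ := hf' S hS
    obtain ⟨N₁, hN₁⟩ := hg' (S ∪ Set.Iio N₀) (hS.union (Set.finite_Iio N₀).hasDensityZero)
    refine ⟨max N₀ N₁, fun n x y hx hy hxy j hjS hj => ?_⟩
    rw [max_le_iff] at hj
    refine hN₁ n _ _ (hf.mapsTo n x hx) (hf.mapsTo n y hy) (fun i hi => ?_) j ?_ hj.2
    · simp only [Set.mem_union, Set.mem_Iio, not_or, not_lt] at hi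
      exact hN₀ n x y hx hy hxy i hi.1 hi.2
    · simpa using ⟨hjS, hj.1⟩

theorem SparseStable.pointwise {g : ∀ n, (Fin n → E) → Fin n → E'} {C : Set E} {C' : Set E'}
    (hg : SparseStable g C C') (hC : IsCompact C) (hC' : IsCompact C') {F : E' → E → E''}
    (hF : Continuous fun q : E' × E => F q.1 q.2) :
    SparseStable (fun n x j => F (g n x j) (x j)) C ((fun q : E' × E => F q.1 q.2) '' C' ×ˢ C) where
  mapsTo n x hx j := ⟨(g n x j, x j), ⟨hg.mapsTo n x hx j, hx j⟩, rfl⟩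
  stable ε hε := by
    obtain ⟨η, hη, hFη⟩ := Metric.uniformContinuousOn_iff.1
      ((hC'.prod hC).uniformContinuousOn_of_continuous hF.continuousOn) ε hε
    obtain ⟨δ₁, hδ₁, hg'⟩ := hg.stable (η / 2) (half_pos hη)
    refine ⟨min δ₁ (η / 2), lt_min hδ₁ (half_pos hη), fun S hS => ?_⟩
    obtain ⟨N, hN⟩ := hg' S hS
    refine ⟨N, fun n x y hx hy hxy j hjS hj => (hFη (g n x j, x j) ⟨hg.mapsTo n x hx j, hx j⟩
      (g n y j, y j) ⟨hg.mapsTo n y hy j, hy j⟩ ?_).le⟩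
    have hg_close := hN n x y hx hy (fun i hi => (hxy i hi).trans (min_le_left _ _)) j hjS hj
    rw [Prod.dist_eq]
    exact (max_le hg_close ((hxy j hjS).trans (min_le_right _ _))).trans_lt (half_lt_self hη)

end SparseStable

theorem AttentionLayer.attn_eq_centerMass {d : ℕ} (L : AttentionLayer d) {n : ℕ}
    (x : Fin n → Fin d → ℝ) (j : Fin n) :
    L.attn x j =
      (Iic j).centerMass (fun i => L.w (x i) (x j) (L.p i j)) (fun i => L.val (x i)) :=
  rfl

theorem AttentionLayer.attn_mem_closedBall {d : ℕ} (L : AttentionLayer d) {n : ℕ}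
    {x : Fin n → Fin d → ℝ} {M : ℝ} (hval : ∀ i, ‖L.val (x i)‖ ≤ M) (j : Fin n) :
    L.attn x j ∈ Metric.closedBall 0 M := by
  rw [L.attn_eq_centerMass]
  exact (convex_closedBall 0 M).centerMass_mem (fun i _ => (L.w_pos _ _ _).le)
    (sum_pos (fun i _ => L.w_pos _ _ _) ⟨j, mem_Iic.2 le_rfl⟩)
    fun i _ => mem_closedBall_zero_iff.2 (hval i)

theorem AttentionLayer.attn_sparseStable {d : ℕ} (L : AttentionLayer d) (hL : L.CompactPE)
    {C : Set (Fin d → ℝ)} (hC : IsCompact C) :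
    ∃ M, SparseStable (fun _ x => L.attn x) C (Metric.closedBall 0 M) := by
  classical
  obtain ⟨P, hP, hpP⟩ := hL
  set D := C ×ˢ C ×ˢ P
  have hD : IsCompact D := hC.prod (hC.prod hP)
  have hmemD {n : ℕ} {x : Fin n → Fin d → ℝ} (hx : ∀ i, x i ∈ C) (i j : Fin n) :
      (x i, x j, L.p i j) ∈ D :=
    ⟨hx i, hx j, hpP _ _⟩
  obtain ⟨M, hM, hval⟩ :=
    (hC.image_of_continuousOn L.val_cont.continuousOn).isBounded.exists_pos_norm_le
  obtain ⟨a, ha, hwa⟩ :=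
    hD.exists_forall_le' L.w_cont.continuousOn fun q _ => L.w_pos q.1 q.2.1 q.2.2
  set Φ : (Fin d → ℝ) × (Fin d → ℝ) × (Fin d → ℝ) → ℝ × (Fin d → ℝ) :=
    fun q => (L.w q.1 q.2.1 q.2.2, L.w q.1 q.2.1 q.2.2 • L.val q.1)
  have hΦ : Continuous Φ := L.w_cont.prodMk (L.w_cont.smul (L.val_cont.comp continuous_fst))
  obtain ⟨R, hR, hΦR⟩ := (hD.image_of_continuousOn hΦ.continuousOn).isBounded.exists_pos_norm_le
  refine ⟨M, fun n x hx => L.attn_mem_closedBall fun i => hval _ ⟨x i, hx i, rfl⟩,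
    fun ε hε => ?_⟩
  -- chosen so that `(1 + M) * ((e + θ * (2 * R)) / a) = ε`
  set e := ε * a / (2 * (1 + M))
  set θ := ε * a / (4 * R * (1 + M))
  obtain ⟨δ, hδ, hΦδ⟩ := Metric.uniformContinuousOn_iff.1
    (hD.uniformContinuousOn_of_continuous hΦ.continuousOn) e (by positivity)
  refine ⟨δ / 2, half_pos hδ, fun S hS => ?_⟩
  obtain ⟨N, hN⟩ := (hS θ (by positivity)).exists_forall_of_atTop
  refine ⟨N, fun n x y hx hy hxy j hjS hj => ?_⟩
  have hdist (i : Fin n) (hi : (i : ℕ) ∉ S) :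
      dist (x i, x j, L.p i j) (y i, y j, L.p i j) < δ := by
    simp only [Prod.dist_eq, dist_self]
    exact (max_le (hxy i hi) (max_le (hxy j hjS) (half_pos hδ).le)).trans_lt (half_lt_self hδ)
  rw [dist_eq_norm, L.attn_eq_centerMass, L.attn_eq_centerMass]
  refine (norm_centerMass_sub_centerMass_le_of_sparse (p := fun i : Fin n => (i : ℕ) ∈ S)
    (w := fun i => L.w (x i) (x j) (L.p i j)) (w' := fun i => L.w (y i) (y j) (L.p i j))
    (z := fun i => L.val (x i)) (z' := fun i => L.val (y i))
    (θ := θ) ⟨j, mem_Iic.2 le_rfl⟩ ha hM.le (by positivity) (by positivity : (0 : ℝ) ≤ 2 * R)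
    (fun i _ => hwa _ (hmemD hx i j)) (fun i _ => L.w_pos _ _ _)
    (fun i _ => hval _ ⟨y i, hy i, rfl⟩)
    (fun i _ hi => (hΦδ _ (hmemD hx i j) _ (hmemD hy i j) (hdist i hi)).le)
    (fun i _ => ?_) ?_).trans_eq ?_
  · refine (dist_le_norm_add_norm _ _).trans ?_
    linarith [hΦR _ ⟨_, hmemD hx i j, rfl⟩, hΦR _ ⟨_, hmemD hy i j, rfl⟩]
  · rw [Fin.card_Iic]
    push_cast
    exact (Nat.cast_le.2 (Fin.card_filter_Iic_le_ncard S j)).trans (hN j hj)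
  · simp only [e, θ]
    field_simp
    ring

theorem AttentionLayer.apply_sparseStable {d : ℕ} (L : AttentionLayer d) (hL : L.CompactPE)
    {C : Set (Fin d → ℝ)} (hC : IsCompact C) :
    ∃ C', IsCompact C' ∧ SparseStable (fun _ x => L.apply x) C C' := by
  obtain ⟨M, hM⟩ := L.attn_sparseStable hL hC
  exact ⟨_, ((isCompact_closedBall 0 M).prod hC).image L.F_cont,
    hM.pointwise hC (isCompact_closedBall 0 M) L.F_cont⟩

theorem applyLayers_sparseStable {d : ℕ} (Ls : List (AttentionLayer d))
    (hLs : ∀ L ∈ Ls, L.CompactPE) {C : Set (Fin d → ℝ)} (hC : IsCompact C) :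
    ∃ C', IsCompact C' ∧ SparseStable (fun _ x => applyLayers Ls x) C C' := by
  induction Ls generalizing C with
  | nil => exact ⟨C, hC, SparseStable.id C⟩
  | cons L Ls ih =>
    obtain ⟨C₁, hC₁, hL⟩ := L.apply_sparseStable (hLs L List.mem_cons_self) hC
    obtain ⟨C₂, hC₂, hLs'⟩ := ih (fun L' hL' => hLs L' (List.mem_cons_of_mem L hL')) hC₁
    exact ⟨C₂, hC₂, hLs'.comp hL⟩

theorem Transformer.exists_dist_eval_lt {A : Type*} [Fintype A] {d : ℕ} (T : Transformer A d)
    (hT : T.IsCompactT) {S : Set ℕ} (hS : HasDensityZero S) {ε : ℝ} (hε : 0 < ε) :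
    ∃ N, ∀ n ≥ N, n ∉ S → ∀ β γ : Fin (n + 1) → A,
      (∀ i : Fin (n + 1), (i : ℕ) ∉ S → β i = γ i) → dist (T.eval β) (T.eval γ) < ε := by
  obtain ⟨⟨K, hK, hembed⟩, hLs⟩ := hT
  obtain ⟨C, hC, hstable⟩ := applyLayers_sparseStable T.layers hLs hK
  obtain ⟨ρ, hρ, hproj⟩ := Metric.uniformContinuousOn_iff.1
    (hC.uniformContinuousOn_of_continuous T.proj_cont.continuousOn) ε hε
  obtain ⟨δ, hδ, hδstable⟩ := hstable.stable (ρ / 2) (half_pos hρ)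
  obtain ⟨N, hN⟩ := hδstable S hS
  refine ⟨N, fun n hn hnS β γ hβγ => hproj _ (hstable.mapsTo _ _ (fun i => hembed _ _) _) _
    (hstable.mapsTo _ _ (fun i => hembed _ _) _) ?_⟩
  refine (hN (n + 1) _ _ (fun i => hembed _ _) (fun i => hembed _ _) (fun i hi => ?_)
    (Fin.last n) hnS hn).trans_lt (half_lt_self hρ)
  rw [hβγ i hi, dist_self]
  exact hδ.le

/-- No compact decoder-only Transformer eventually learns both the all-zero sequence and
the increasing-spacing sequence (whose `n`-th term is `1` iff `n = m(m+1)/2` for some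
`m ≥ 1`). -/
theorem no_learn_zero_and_increasing_spacing {A : Type*} [Fintype A] (zero one : A)
    (h01 : zero ≠ one) (α : ℕ → A)
    (hα : ∀ n : ℕ, 1 ≤ n →
      ((∃ m : ℕ, 1 ≤ m ∧ m * (m + 1) = 2 * n) → α n = one) ∧
      (¬ (∃ m : ℕ, 1 ≤ m ∧ m * (m + 1) = 2 * n) → α n = zero))
    {d : ℕ} (T : Transformer A d) (hT : T.IsCompactT) :
    ¬ (EventuallyLearns T (fun _ => zero) ∧ EventuallyLearns T α) := by
  rintro ⟨⟨ε₀, hε₀, n₀, hzero⟩, ⟨ε₁, hε₁, n₁, hlearn⟩⟩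
  obtain ⟨N, hN⟩ := T.exists_dist_eval_lt hT hasDensityZero_isTriangular_succ (lt_min hε₀ hε₁)
  obtain ⟨n, hn, htri, hnot⟩ := exists_isTriangular_add_two (max N (max n₀ n₁))
  simp only [max_le_iff] at hn
  have hnext : α (n + 2) = one := (hα (n + 2) (by omega)).1 htri
  have hclose := hN n hn.1 hnot (fun i => α (i + 1)) (fun _ => zero)
    fun i hi => (hα (i + 1) (by omega)).2 hi
  have h₀ := hzero n hn.2.1 one h01.symm
  have h₁ := hlearn n hn.2.2 zero (hnext ▸ h01)
  rw [hnext] at h₁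
  have hσ (σ : A) := abs_sub_lt_iff.1 <| (dist_le_pi_dist _ _ σ).trans_lt hclose
  linarith [(hσ zero).2, (hσ one).1, min_le_left ε₀ ε₁, min_le_right ε₀ ε₁]
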